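/- (Property 3 in the proof of Theorem 4.18, invariance under j-closure.) Let C = (X_1,…,X_k) be a sequence of itemsets, 0 ≤ i ≤ k, and G ⊆ C. Then S^i(G) = S^i(cl(G, i)). -/
import Mathlib


open scoped BigOperators

/-- A transaction over `N` items: an element of `{0,1}^N`. -/
abbrev Transaction (N : ℕ) := Fin N → Bool

/-- A transaction `t` supports an itemset `X` iff `t i = 1` for all `i ∈ X`. -/
def supports {N : ℕ} (X : Finset (Fin N)) (t : Transaction N) : Prop :=
  ∀ i ∈ X, t i = true

instance {N : ℕ} (X : Finset (Fin N)) (t : Transaction N) : Decidable (supports X t) :=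
  inferInstanceAs (Decidable (∀ i ∈ X, t i = true))

/-- A distribution on `{0,1}^N`: values in `[0,1]` summing to one. -/
def IsDistr {N : ℕ} (p : Transaction N → ℝ) : Prop :=
  (∀ t, 0 ≤ p t ∧ p t ≤ 1) ∧ ∑ t, p t = 1

/-- `p(X = 1)`: the probability that a transaction supports `X`. -/
def probOne {N : ℕ} (p : Transaction N → ℝ) (X : Finset (Fin N)) : ℝ :=
  ∑ t, if supports X t then p t else 0

/-- The prefix `C_j = {X_1, …, X_j}` of the sequence `C = (X_1, …, X_k)`
(`j`-many first members, 0-based: indices `m` with `m < j`). -/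
def prefixC {N k : ℕ} (X : Fin k → Finset (Fin N)) (j : ℕ) : Finset (Finset (Fin N)) :=
  (Finset.univ.filter (fun m : Fin k => (m : ℕ) < j)).image X

/-- Closure of a subcollection `G` w.r.t. the collection `C`:
`cl(G) = {X ∈ C : X ⊆ ⋃_{Y ∈ G} Y}`. -/
def clOf {N : ℕ} (C G : Finset (Finset (Fin N))) : Finset (Finset (Fin N)) :=
  C.filter (fun Y => Y ⊆ G.biUnion id)

/-- The `j`-closure `cl(G, j) = G ∪ (cl(G) \ C_j)`. -/
def jclosure {N k : ℕ} (X : Fin k → Finset (Fin N)) (G : Finset (Finset (Fin N)))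
    (j : ℕ) : Finset (Finset (Fin N)) :=
  G ∪ (clOf (Finset.univ.image X) G \ prefixC X j)

/-- `S^i(G)`: transactions supporting every member of `G` and no member of
`C_i \ G`. -/
def Sfun {N k : ℕ} (X : Fin k → Finset (Fin N)) (i : ℕ)
    (G : Finset (Finset (Fin N))) : Finset (Transaction N) :=
  Finset.univ.filter (fun t =>
    (∀ Y ∈ G, supports Y t) ∧
      ∀ m : Fin k, (m : ℕ) < i → X m ∉ G → ¬ supports (X m) t)

/-- Property 3 in the proof of Theorem 4.18 (invariance under `j`-closure):
`S^i(G) = S^i(cl(G, i))`. -/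
theorem Sfun_jclosure_invariant {N k : ℕ} (hN : 1 ≤ N)
    (X : Fin k → Finset (Fin N)) (i : ℕ) (hi : i ≤ k)
    (G : Finset (Finset (Fin N))) (hG : G ⊆ Finset.univ.image X) :
    Sfun X i G = Sfun X i (jclosure X G i) := by
  ext t
  simp only [Sfun, Finset.mem_filter, Finset.mem_univ, true_and]
  constructor
  · rintro ⟨hsup, hneg⟩
    constructor
    · intro Y hY
      rcases Finset.mem_union.1 hY with h | h
      · exact hsup Y h
      · have hcl : Y ⊆ G.biUnion id :=
          (Finset.mem_filter.1 (Finset.mem_sdiff.1 h).1).2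
        intro j hj
        rcases Finset.mem_biUnion.1 (hcl hj) with ⟨Z, hZ, hjZ⟩
        exact hsup Z hZ j hjZ
    · intro m hm hmG
      exact hneg m hm (fun h => hmG (Finset.mem_union_left _ h))
  · rintro ⟨hsup, hneg⟩
    refine ⟨fun Y hY => hsup Y (Finset.mem_union_left _ hY), fun m hm hmG => ?_⟩
    by_cases hmc : X m ∈ jclosure X G i
    · rcases Finset.mem_union.1 hmc with h | h
      · exact absurd h hmG
      · exact absurd (show X m ∈ prefixC X i by
            simp only [prefixC, Finset.mem_image, Finset.mem_filter, Finset.mem_univ, true_and]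
            exact ⟨m, hm, rfl⟩) (Finset.mem_sdiff.1 h).2
    · exact hneg m hm hmc
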